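/- The Turán number of D_b(3,3;1) satisfies: ex(6, D_b(3,3;1)) = 12, and for every integer n ≥ 7, ex(n, D_b(3,3;1)) = ⌊n²/4⌋ + ⌈n/2⌉ − 1. -/

import Mathlib

set_option maxRecDepth 8000
set_option maxHeartbeats 1600000

open SimpleGraph

/-- `H.ContainsCopy G` means `G` contains a subgraph isomorphic to `H`. -/
def SimpleGraph.ContainsCopy {W V : Type*} (H : SimpleGraph W) (G : SimpleGraph V) : Prop :=
  ∃ f : W → V, Function.Injective f ∧ ∀ ⦃a b : W⦄, H.Adj a b → G.Adj (f a) (f b)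

/-- The Turán number `ex(n, H)`: the maximum number of edges in a simple graph on `n`
vertices containing no subgraph isomorphic to `H`. -/
noncomputable def exNum {W : Type*} (n : ℕ) (H : SimpleGraph W) : ℕ :=
  sSup {m : ℕ | ∃ G : SimpleGraph (Fin n), ¬ H.ContainsCopy G ∧ G.edgeSet.ncard = m}

/-- The dumbbell graph `D_b(r₁, r₂; q)`: two cycles of lengths `r₁` (on vertices
`0, …, r₁-1`, closed by the chord `{0, r₁-1}`) and `r₂` (on vertices
`r₁+q-1, …, r₁+r₂+q-2`, closed by the chord `{r₁+q-1, r₁+r₂+q-2}`), joined by the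
path `r₁-1, r₁, …, r₁+q-1` of length `q` (for `q = 0` the two cycles share the
single vertex `r₁-1`). -/
def dumbbell (r₁ r₂ q : ℕ) : SimpleGraph (Fin (r₁ + r₂ + q - 1)) :=
  SimpleGraph.fromRel fun i j =>
    (i : ℕ) + 1 = (j : ℕ) ∨ ((i : ℕ) = 0 ∧ (j : ℕ) = r₁ - 1) ∨
      ((i : ℕ) = r₁ + q - 1 ∧ (j : ℕ) = r₁ + r₂ + q - 2)

/-- The theta graph `θ(1,2,2)`, i.e. `K₄` minus one edge. -/
def theta122 : SimpleGraph (Fin 4) :=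
  (⊤ : SimpleGraph (Fin 4)).deleteEdges {s(2, 3)}

section helpers
open SimpleGraph Finset
variable {V : Type*} {G : SimpleGraph V}

lemma dumbbell_copy {a b c d e f : V}
    (had : a ≠ d) (hae : a ≠ e) (haf : a ≠ f)
    (hbd : b ≠ d) (hbe : b ≠ e) (hbf : b ≠ f)
    (hce : c ≠ e) (hcf : c ≠ f)
    (hab : G.Adj a b) (hbc : G.Adj b c) (hac : G.Adj a c)
    (hcd : G.Adj c d) (hde : G.Adj d e) (hef : G.Adj e f) (hdf : G.Adj d f) :
    (dumbbell 3 3 1).ContainsCopy G := by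
  refine ⟨![a,b,c,d,e,f], ?_, ?_⟩
  · have h1 := hab.ne; have h2 := hbc.ne; have h3 := hac.ne
    have h4 := hcd.ne; have h5 := hde.ne; have h6 := hef.ne; have h7 := hdf.ne
    intro x y hxy
    fin_cases x <;> fin_cases y <;> simp at hxy <;>
      first
        | rfl
        | exact absurd hxy h1 | exact absurd hxy.symm h1
        | exact absurd hxy h2 | exact absurd hxy.symm h2
        | exact absurd hxy h3 | exact absurd hxy.symm h3
        | exact absurd hxy h4 | exact absurd hxy.symm h4
        | exact absurd hxy h5 | exact absurd hxy.symm h5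
        | exact absurd hxy h6 | exact absurd hxy.symm h6
        | exact absurd hxy h7 | exact absurd hxy.symm h7
        | exact absurd hxy had | exact absurd hxy.symm had
        | exact absurd hxy hae | exact absurd hxy.symm hae
        | exact absurd hxy haf | exact absurd hxy.symm haf
        | exact absurd hxy hbd | exact absurd hxy.symm hbd
        | exact absurd hxy hbe | exact absurd hxy.symm hbe
        | exact absurd hxy hbf | exact absurd hxy.symm hbf
        | exact absurd hxy hce | exact absurd hxy.symm hce
        | exact absurd hxy hcf | exact absurd hxy.symm hcf
  · intro x y hxy
    fin_cases x <;> fin_cases y <;>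
      simp only [dumbbell, fromRel_adj, Matrix.cons_val_zero, Matrix.cons_val_one,
        Matrix.head_cons] at hxy ⊢ <;>
      first
        | (exfalso; revert hxy; decide)
        | exact hab | exact hab.symm | exact hbc | exact hbc.symm
        | exact hac | exact hac.symm | exact hcd | exact hcd.symm
        | exact hde | exact hde.symm | exact hef | exact hef.symm
        | exact hdf | exact hdf.symm

end helpers

section helpers2
open SimpleGraph Finset
variable {V : Type*} {G : SimpleGraph V}

lemma copy_of_induce {W : Type*} {H : SimpleGraph W} {s : Set V}
    (h : H.ContainsCopy (G.induce s)) : H.ContainsCopy G := by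
  obtain ⟨f, hinj, hadj⟩ := h
  exact ⟨fun w => (f w : V), fun x y hxy => hinj (Subtype.val_injective hxy),
    fun a b hab => by simpa using hadj hab⟩

variable [Fintype V] [DecidableEq V] [DecidableRel G.Adj]

lemma exists_common_nbr {x y : V}
    (h : Fintype.card V < G.degree x + G.degree y) :
    ∃ z, G.Adj x z ∧ G.Adj y z := by
  have hsub : G.neighborFinset x ∪ G.neighborFinset y ⊆ univ := subset_univ _
  have hcard := card_le_card hsub
  rw [card_univ] at hcard
  have h2 : (G.neighborFinset x ∩ G.neighborFinset y).Nonempty := by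
    rw [← card_pos]
    have := card_union_add_card_inter (G.neighborFinset x) (G.neighborFinset y)
    rw [card_neighborFinset_eq_degree, card_neighborFinset_eq_degree] at this
    omega
  obtain ⟨z, hz⟩ := h2
  rw [mem_inter, mem_neighborFinset, mem_neighborFinset] at hz
  exact ⟨z, hz.1, hz.2⟩

lemma deg_split (T : Finset V) (v : V) :
    G.degree v = #(T.filter (G.Adj v)) + #((univ \ T).filter (G.Adj v)) := by
  rw [← card_neighborFinset_eq_degree, neighborFinset_eq_filter]
  rw [← card_union_of_disjoint, ← filter_union, union_sdiff_of_subset (subset_univ T)]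
  exact disjoint_filter_filter (disjoint_sdiff)

lemma cross_sum (A B : Finset V) :
    ∑ a ∈ A, #(B.filter (G.Adj a)) = ∑ b ∈ B, #(A.filter (G.Adj b)) := by
  simp only [card_filter]
  rw [Finset.sum_comm]
  refine Finset.sum_congr rfl fun b _ => Finset.sum_congr rfl fun a _ => ?_
  by_cases h : G.Adj a b
  · rw [if_pos h, if_pos h.symm]
  · rw [if_neg h, if_neg (fun hc => h hc.symm)]

/-- Lemma A: two disjoint triangles plus min degree `≥ (n+1)/2` give a dumbbell. -/
lemma lemA {a b c d e f : V}
    (hdeg : ∀ v, Fintype.card V + 1 ≤ 2 * G.degree v)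
    (had : a ≠ d) (hae : a ≠ e) (haf : a ≠ f)
    (hbd : b ≠ d) (hbe : b ≠ e) (hbf : b ≠ f)
    (hcd : c ≠ d) (hce : c ≠ e) (hcf : c ≠ f)
    (hab : G.Adj a b) (hbc : G.Adj b c) (hac : G.Adj a c)
    (hde : G.Adj d e) (hef : G.Adj e f) (hdf : G.Adj d f) :
    (dumbbell 3 3 1).ContainsCopy G := by
  by_cases h1 : G.Adj a d
  · exact dumbbell_copy hbd hbe hbf hcd hce hcf hae haf hbc hac.symm hab.symm h1 hde hef hdf
  by_cases h2 : G.Adj a e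
  · exact dumbbell_copy hbe hbd hbf hce hcd hcf had haf hbc hac.symm hab.symm h2 hde.symm hdf hef
  by_cases h3 : G.Adj a f
  · exact dumbbell_copy hbf hbd hbe hcf hcd hce had hae hbc hac.symm hab.symm h3 hdf.symm hde hef.symm
  by_cases h4 : G.Adj b d
  · exact dumbbell_copy had hae haf hcd hce hcf hbe hbf hac hbc.symm hab h4 hde hef hdf
  by_cases h5 : G.Adj b e
  · exact dumbbell_copy hae had haf hce hcd hcf hbd hbf hac hbc.symm hab h5 hde.symm hdf hef
  by_cases h6 : G.Adj b f
  · exact dumbbell_copy haf had hae hcf hcd hce hbd hbe hac hbc.symm hab h6 hdf.symm hde hef.symm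
  by_cases h7 : G.Adj c d
  · exact dumbbell_copy had hae haf hbd hbe hbf hce hcf hab hbc hac h7 hde hef hdf
  by_cases h8 : G.Adj c e
  · exact dumbbell_copy hae had haf hbe hbd hbf hcd hcf hab hbc hac h8 hde.symm hdf hef
  by_cases h9 : G.Adj c f
  · exact dumbbell_copy haf had hae hbf hbd hbe hcd hce hab hbc hac h9 hdf.symm hde hef.symm
  -- no cross edges; find common neighbour z of a and d
  have hz : ∃ z, G.Adj a z ∧ G.Adj d z := by
    apply exists_common_nbr
    have := hdeg a; have := hdeg d; omega
  obtain ⟨z, hza, hzd⟩ := hz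
  have hzb : z ≠ b := fun h => h4 (h ▸ hzd).symm
  have hzc : z ≠ c := fun h => h7 (h ▸ hzd).symm
  have hze : z ≠ e := fun h => h2 (h ▸ hza)
  have hzf : z ≠ f := fun h => h3 (h ▸ hza)
  have hw : ∃ w, G.Adj a w ∧ G.Adj z w := by
    apply exists_common_nbr
    have := hdeg a; have := hdeg z; omega
  obtain ⟨w, hwa, hwz⟩ := hw
  have hwd : w ≠ d := fun h => h1 (h ▸ hwa)
  have hwe : w ≠ e := fun h => h2 (h ▸ hwa)
  have hwf : w ≠ f := fun h => h3 (h ▸ hwa)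
  -- triangle (w, a, z) with bridge z—d, triangle (d, e, f)
  exact dumbbell_copy hwd hwe hwf had hae haf hze hzf hwa.symm hza hwz.symm hzd.symm hde hef hdf

end helpers2

section helpers3
open SimpleGraph Finset
variable {V : Type*} {G : SimpleGraph V} [Fintype V] [DecidableEq V] [DecidableRel G.Adj]

lemma common_lower (x y : V) :
    G.degree x + G.degree y ≤
      Fintype.card V + #(univ.filter fun p => G.Adj x p ∧ G.Adj y p) := by
  have hfi : univ.filter (fun p => G.Adj x p ∧ G.Adj y p)
      = G.neighborFinset x ∩ G.neighborFinset y := by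
    ext p; simp [mem_neighborFinset]
  rw [hfi]
  have h1 := card_union_add_card_inter (G.neighborFinset x) (G.neighborFinset y)
  have h2 : #(G.neighborFinset x ∪ G.neighborFinset y) ≤ Fintype.card V := by
    rw [← card_univ]; exact card_le_card (subset_univ _)
  rw [card_neighborFinset_eq_degree, card_neighborFinset_eq_degree] at h1
  omega

lemma dense_dumbbell (hn : 8 ≤ Fintype.card V)
    (hdeg : ∀ v, Fintype.card V + 2 ≤ 2 * G.degree v) :
    (dumbbell 3 3 1).ContainsCopy G := by
  have hdeg1 : ∀ v, Fintype.card V + 1 ≤ 2 * G.degree v := fun v => by have := hdeg v; omega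
  have hδ : ∀ v, 5 ≤ G.degree v := fun v => by have := hdeg v; omega
  have hne : Nonempty V := Fintype.card_pos_iff.mp (by omega)
  obtain ⟨v0⟩ := hne
  obtain ⟨u, hu⟩ : (G.neighborFinset v0).Nonempty := by
    rw [← card_pos, card_neighborFinset_eq_degree]; have := hδ v0; omega
  rw [mem_neighborFinset] at hu
  obtain ⟨w, hwu, hwv0⟩ : ∃ z, G.Adj u z ∧ G.Adj v0 z := by
    apply exists_common_nbr; have := hδ u; have := hδ v0
    have := hdeg u; have := hdeg v0; omega
  -- triangle u, v0, w
  set T : Finset V := {u, v0, w} with hT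
  have huT : u ∈ T := by simp [hT]
  have hv0T : v0 ∈ T := by simp [hT]
  have hwT : w ∈ T := by simp [hT]
  have hTcard : #T ≤ 3 := by
    apply le_trans (card_insert_le _ _); simp [card_insert_le]
    have := card_insert_le v0 ({w} : Finset V); rw [card_singleton] at this; omega
  set S : Finset V := univ \ T with hS
  by_cases htri : ∃ x ∈ S, ∃ y ∈ S, ∃ z ∈ S, G.Adj x y ∧ G.Adj y z ∧ G.Adj x z
  · obtain ⟨x, hx, y, hy, z, hz, hxy, hyz, hxz⟩ := htri
    have hxT : x ∉ T := (mem_sdiff.mp hx).2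
    have hyT : y ∉ T := (mem_sdiff.mp hy).2
    have hzT : z ∉ T := (mem_sdiff.mp hz).2
    have n1 : u ≠ x := fun h => hxT (h ▸ huT)
    have n2 : u ≠ y := fun h => hyT (h ▸ huT)
    have n3 : u ≠ z := fun h => hzT (h ▸ huT)
    have n4 : v0 ≠ x := fun h => hxT (h ▸ hv0T)
    have n5 : v0 ≠ y := fun h => hyT (h ▸ hv0T)
    have n6 : v0 ≠ z := fun h => hzT (h ▸ hv0T)
    have n7 : w ≠ x := fun h => hxT (h ▸ hwT)
    have n8 : w ≠ y := fun h => hyT (h ▸ hwT)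
    have n9 : w ≠ z := fun h => hzT (h ▸ hwT)
    exact lemA hdeg1 n1 n2 n3 n4 n5 n6 n7 n8 n9 hu.symm hwv0 hwu hxy hyz hxz
  · push_neg at htri
    have hScard : Fintype.card V - 3 ≤ #S := by
      rw [hS, card_sdiff_of_subset (subset_univ T), card_univ]; omega
    have hSnbr : ∀ x ∈ S, 2 ≤ #(S.filter (G.Adj x)) := by
      intro x _
      have h1 := deg_split (G := G) T x
      have h2 : #(T.filter (G.Adj x)) ≤ 3 := le_trans (card_filter_le _ _) hTcard
      have := hδ x; rw [hS]; omega
    obtain ⟨x, hxS⟩ : S.Nonempty := by rw [← card_pos]; omega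
    obtain ⟨y, hy⟩ : (S.filter (G.Adj x)).Nonempty := by
      rw [← card_pos]; have := hSnbr x hxS; omega
    have hyS : y ∈ S := (mem_filter.mp hy).1
    have hxy : G.Adj x y := (mem_filter.mp hy).2
    obtain ⟨x'', hx''⟩ : (S \ {x, y}).Nonempty := by
      rw [← card_pos]
      have h1 : #S - #({x, y} : Finset V) ≤ #(S \ ({x, y} : Finset V)) := le_card_sdiff _ _
      have h3 : #({x, y} : Finset V) ≤ 2 := card_insert_le _ _ |>.trans (by simp)
      omega
    have hx''S : x'' ∈ S := (mem_sdiff.mp hx'').1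
    have hx''xy : x'' ∉ ({x, y} : Finset V) := (mem_sdiff.mp hx'').2
    have hx''x : x'' ≠ x := fun h => hx''xy (by simp [h])
    have hx''y : x'' ≠ y := fun h => hx''xy (by simp [h])
    obtain ⟨z, hzmem, hzxy⟩ : ∃ z ∈ S.filter (G.Adj x''), z ∉ ({x, y} : Finset V) := by
      by_contra hcon
      push_neg at hcon
      have hsub : S.filter (G.Adj x'') ⊆ {x, y} := hcon
      have heq : S.filter (G.Adj x'') = {x, y} := by
        apply eq_of_subset_of_card_le hsub
        have hc2 : #({x, y} : Finset V) = 2 := by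
          rw [card_insert_of_notMem (by simp [hxy.ne]), card_singleton]
        rw [hc2]; exact hSnbr x'' hx''S
      have hx1 : x ∈ S.filter (G.Adj x'') := by rw [heq]; simp
      have hy1 : y ∈ S.filter (G.Adj x'') := by rw [heq]; simp
      exact htri x hxS y hyS x'' hx''S hxy (mem_filter.mp hy1).2.symm (mem_filter.mp hx1).2.symm
    have hzS : z ∈ S := (mem_filter.mp hzmem).1
    have hx''z : G.Adj x'' z := (mem_filter.mp hzmem).2
    have hzx : z ≠ x := fun h => hzxy (by simp [h])
    have hzy : z ≠ y := fun h => hzxy (by simp [h])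
    -- common neighbour sets
    set C1 := univ.filter (fun p => G.Adj x p ∧ G.Adj y p) with hC1
    set C2 := univ.filter (fun p => G.Adj x'' p ∧ G.Adj z p) with hC2
    have hC1card : 2 ≤ #C1 := by
      rw [hC1]
      have := common_lower (G := G) x y
      have := hdeg x; have := hdeg y; omega
    have hC2card : 2 ≤ #C2 := by
      rw [hC2]
      have := common_lower (G := G) x'' z
      have := hdeg x''; have := hdeg z; omega
    have hC1T : C1 ⊆ T := by
      intro p hp
      rw [hC1, mem_filter] at hp
      by_contra hpT
      have hpS : p ∈ S := by rw [hS, mem_sdiff]; exact ⟨mem_univ _, hpT⟩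
      exact htri x hxS y hyS p hpS hxy hp.2.2 hp.2.1
    have hC2T : C2 ⊆ T := by
      intro p hp
      rw [hC2, mem_filter] at hp
      by_contra hpT
      have hpS : p ∈ S := by rw [hS, mem_sdiff]; exact ⟨mem_univ _, hpT⟩
      exact htri x'' hx''S z hzS p hpS hx''z hp.2.2 hp.2.1
    obtain ⟨t2, ht2⟩ : C2.Nonempty := by rw [← card_pos]; omega
    obtain ⟨t1, ht1e⟩ : (C1.erase t2).Nonempty := by
      rw [← card_pos]
      have := pred_card_le_card_erase (s := C1) (a := t2)
      omega
    have ht1 : t1 ∈ C1 := mem_of_mem_erase ht1e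
    have ht12 : t1 ≠ t2 := ne_of_mem_erase ht1e
    have ht1T : t1 ∈ T := hC1T ht1
    have ht2T : t2 ∈ T := hC2T ht2
    rw [hC1, mem_filter] at ht1
    rw [hC2, mem_filter] at ht2
    -- triangles (x, y, t1) and (x'', z, t2)
    have hxS' : x ∉ T := (mem_sdiff.mp hxS).2
    have hyS' : y ∉ T := (mem_sdiff.mp hyS).2
    have hzS' : z ∉ T := (mem_sdiff.mp hzS).2
    have hx''S' : x'' ∉ T := (mem_sdiff.mp hx''S).2
    have m1 : x ≠ x'' := fun h => hx''x h.symm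
    have m2 : x ≠ z := fun h => hzx h.symm
    have m3 : x ≠ t2 := fun h => hxS' (h ▸ ht2T)
    have m4 : y ≠ x'' := fun h => hx''y h.symm
    have m5 : y ≠ z := fun h => hzy h.symm
    have m6 : y ≠ t2 := fun h => hyS' (h ▸ ht2T)
    have m7 : t1 ≠ x'' := fun h => hx''S' (h ▸ ht1T)
    have m8 : t1 ≠ z := fun h => hzS' (h ▸ ht1T)
    exact lemA hdeg1 m1 m2 m3 m4 m5 m6 m7 m8 ht12 hxy ht1.2.2 ht1.2.1
      hx''z ht2.2.2 ht2.2.1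

end helpers3

section helpers4
open SimpleGraph Finset
variable {V : Type*} {G : SimpleGraph V} [Fintype V] [DecidableEq V] [DecidableRel G.Adj]

instance indDecInduce (s : Set V) [DecidablePred (· ∈ s)] :
    DecidableRel (G.induce s).Adj := fun a b =>
  decidable_of_iff (G.Adj a b) (by simp)

lemma card_edge_induce (v : V) [DecidableRel (G.induce {x | x ≠ v}).Adj] :
    #(G.induce {x | x ≠ v}).edgeFinset + G.degree v = #G.edgeFinset := by
  classical
  rw [← card_incidenceFinset_eq_degree, incidenceFinset_eq_filter]
  have hsplit := card_filter_add_card_filter_not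
    (s := G.edgeFinset) (p := fun e => v ∈ e)
  rw [← hsplit, add_comm]
  congr 1
  apply Finset.card_bij (fun e _ => Sym2.map Subtype.val e)
  · intro e he
    induction e with
    | _ a b =>
      rw [mem_edgeFinset, mem_edgeSet] at he
      simp only [Sym2.map_pair_eq, mem_filter, mem_edgeFinset, mem_edgeSet]
      refine ⟨he, ?_⟩
      rw [Sym2.mem_iff]
      push_neg
      exact ⟨fun h => a.2 h.symm, fun h => b.2 h.symm⟩
  · intro e1 _ e2 _ heq
    exact Sym2.map.injective Subtype.val_injective heq
  · intro e he
    induction e with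
    | _ a b =>
      rw [mem_filter, mem_edgeFinset, mem_edgeSet] at he
      obtain ⟨hadj, hv⟩ := he
      rw [Sym2.mem_iff] at hv
      push_neg at hv
      refine ⟨s(⟨a, fun h => hv.1 h.symm⟩, ⟨b, fun h => hv.2 h.symm⟩), ?_, ?_⟩
      · rw [mem_edgeFinset, mem_edgeSet]
        exact hadj
      · simp

lemma card_subtype_ne (v : V) :
    Fintype.card {x : V // x ≠ v} = Fintype.card V - 1 := by
  have := Fintype.card_subtype_compl (fun x : V => x = v)
  simp only [Fintype.card_subtype_eq] at this
  convert this using 2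

end helpers4

section upperskeleton
open SimpleGraph Finset

def dbound (n : ℕ) : ℕ := if n ≤ 6 then 12 else n ^ 2 / 4 + (n + 1) / 2 - 1

lemma dbound_succ {n : ℕ} (hn : 7 ≤ n) : dbound (n + 1) = dbound n + (n + 2) / 2 := by
  have h1 : ¬ (n + 1 ≤ 6) := by omega
  have h2 : ¬ (n ≤ 6) := by omega
  rw [dbound, dbound, if_neg h1, if_neg h2]
  rcases Nat.even_or_odd n with ⟨k, hk⟩ | ⟨k, hk⟩
  · have e1 : n ^ 2 = 4 * (k * k) := by subst hk; ring
    have e2 : (n + 1) ^ 2 = 4 * (k * k + k) + 1 := by subst hk; ring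
    omega
  · have e1 : n ^ 2 = 4 * (k * k + k) + 1 := by subst hk; ring
    have e2 : (n + 1) ^ 2 = 4 * (k * k + 2 * k + 1) := by subst hk; ring
    omega

lemma dbound_seven : dbound 7 = 15 := by rw [dbound]; norm_num

lemma dbound_six : dbound 6 = 12 := rfl

lemma pair_filter_le {V : Type} [DecidableEq V] {G : SimpleGraph V} [DecidableRel G.Adj]
    (p a b : V) (hne : a ≠ b) (hnab : ¬(G.Adj p a ∧ G.Adj p b)) :
    #(({a, b} : Finset V).filter (G.Adj p)) ≤ 1 := by
  by_contra hgt
  push_neg at hgt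
  have hc2 : #({a, b} : Finset V) = 2 := by
    rw [card_insert_of_notMem (by simp [hne]), card_singleton]
  have heq : ({a, b} : Finset V).filter (G.Adj p) = {a, b} :=
    eq_of_subset_of_card_le (filter_subset _ _) (by omega)
  have ha : G.Adj p a := (mem_filter.mp (heq ▸ mem_insert_self a ({b} : Finset V))).2
  have hb : G.Adj p b := (mem_filter.mp (heq ▸ mem_insert_of_mem (mem_singleton_self b))).2
  exact hnab ⟨ha, hb⟩

lemma sym2_ne₁ {V : Type*} {x y z w : V} (h : x ≠ z) (h' : x ≠ w) : s(x, y) ≠ s(z, w) := by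
  intro hh
  rcases Sym2.eq_iff.mp hh with ⟨h1, _⟩ | ⟨h1, _⟩
  exacts [h h1, h' h1]

lemma sym2_ne₂ {V : Type*} {x y z w : V} (h : y ≠ w) (h' : x ≠ w) : s(x, y) ≠ s(z, w) := by
  intro hh
  rcases Sym2.eq_iff.mp hh with ⟨_, h1⟩ | ⟨h1, _⟩
  exacts [h h1, h' h1]

lemma sym2_ne₃ {V : Type*} {x y z w : V} (h : x ≠ z) (h' : y ≠ z) : s(x, y) ≠ s(z, w) := by
  intro hh
  rcases Sym2.eq_iff.mp hh with ⟨h1, _⟩ | ⟨_, h1⟩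
  exacts [h h1, h' h1]

lemma six_upper {V : Type} [Fintype V] [DecidableEq V] (G : SimpleGraph V)
    [DecidableRel G.Adj] (hc : Fintype.card V = 6)
    (hfree : ¬ (dumbbell 3 3 1).ContainsCopy G) : #G.edgeFinset ≤ 12 := by
  by_contra hbig
  push_neg at hbig
  have htop : #(⊤ : SimpleGraph V).edgeFinset = 15 := by
    rw [card_edgeFinset_top_eq_card_choose_two, hc]
    rfl
  have hsub : G.edgeFinset ⊆ (⊤ : SimpleGraph V).edgeFinset := edgeFinset_mono le_top
  have hno3 : ∀ a b c d p q : V, ¬G.Adj a b → ¬G.Adj c d → ¬G.Adj p q →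
      a ≠ b → c ≠ d → p ≠ q → s(a, b) ≠ s(c, d) → s(a, b) ≠ s(p, q) →
      s(c, d) ≠ s(p, q) → False := by
    intro a b c d p q h1 h2 h3 n1 n2 n3 d1 d2 d3
    have hK : ({s(a, b), s(c, d), s(p, q)} : Finset (Sym2 V))
        ⊆ (⊤ : SimpleGraph V).edgeFinset \ G.edgeFinset := by
      intro e he
      simp only [mem_insert, mem_singleton] at he
      rcases he with h | h | h <;> subst h <;>
        (rw [mem_sdiff, mem_edgeFinset, mem_edgeFinset, mem_edgeSet, mem_edgeSet, top_adj])
      exacts [⟨n1, h1⟩, ⟨n2, h2⟩, ⟨n3, h3⟩]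
    have h3card : #({s(a, b), s(c, d), s(p, q)} : Finset (Sym2 V)) = 3 := by
      rw [card_insert_of_notMem (by simp [d1, d2]),
        card_insert_of_notMem (by simp [d3]), card_singleton]
    have h4 := card_le_card hK
    rw [card_sdiff_of_subset hsub, htop, h3card] at h4
    omega
  by_cases hall : ∀ x y : V, x ≠ y → G.Adj x y
  · apply hfree
    have e6 := (Fintype.equivFinOfCardEq hc).symm
    have hinj := e6.injective
    exact dumbbell_copy
      (hinj.ne (show (0 : Fin 6) ≠ 3 by decide)) (hinj.ne (show (0 : Fin 6) ≠ 4 by decide))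
      (hinj.ne (show (0 : Fin 6) ≠ 5 by decide)) (hinj.ne (show (1 : Fin 6) ≠ 3 by decide))
      (hinj.ne (show (1 : Fin 6) ≠ 4 by decide)) (hinj.ne (show (1 : Fin 6) ≠ 5 by decide))
      (hinj.ne (show (2 : Fin 6) ≠ 4 by decide)) (hinj.ne (show (2 : Fin 6) ≠ 5 by decide))
      (hall _ _ (hinj.ne (by decide))) (hall _ _ (hinj.ne (by decide)))
      (hall _ _ (hinj.ne (by decide))) (hall _ _ (hinj.ne (by decide)))
      (hall _ _ (hinj.ne (by decide))) (hall _ _ (hinj.ne (by decide)))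
      (hall _ _ (hinj.ne (by decide)))
  · push_neg at hall
    obtain ⟨a, b, hab_ne, hnab⟩ := hall
    have hcover : ∃ p q : V, p ≠ q ∧
        (∀ x y : V, x ≠ y → ¬G.Adj x y → x = p ∨ x = q ∨ y = p ∨ y = q) ∧
        (∀ z1 z2 : V, z1 ∉ ({p, q} : Finset V) → z2 ∉ ({p, q} : Finset V) →
          ¬G.Adj p z1 → ¬G.Adj p z2 → z1 = z2) ∧
        (∀ z1 z2 : V, z1 ∉ ({p, q} : Finset V) → z2 ∉ ({p, q} : Finset V) →
          ¬G.Adj q z1 → ¬G.Adj q z2 → z1 = z2) ∧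
        (∀ z : V, z ∉ ({p, q} : Finset V) → ¬G.Adj p z → G.Adj q z) := by
      by_cases h2 : ∃ c d : V, c ≠ d ∧ ¬G.Adj c d ∧ c ∉ ({a, b} : Finset V) ∧
          d ∉ ({a, b} : Finset V)
      · obtain ⟨c, d, hcd_ne, hncd, hcab, hdab⟩ := h2
        have hca : c ≠ a := fun h => hcab (by simp [h])
        have hcb : c ≠ b := fun h => hcab (by simp [h])
        have hda : d ≠ a := fun h => hdab (by simp [h])
        have hdb : d ≠ b := fun h => hdab (by simp [h])
        refine ⟨a, c, Ne.symm hca, ?_, ?_, ?_, ?_⟩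
        · intro x y hxy hnxy
          by_contra hcon
          push_neg at hcon
          obtain ⟨hxa, hxc, hya, hyc⟩ := hcon
          exact hno3 a b c d x y hnab hncd hnxy hab_ne hcd_ne hxy
            (sym2_ne₁ (Ne.symm hca) (Ne.symm hda))
            (sym2_ne₁ (Ne.symm hxa) (Ne.symm hya))
            (sym2_ne₁ (Ne.symm hxc) (Ne.symm hyc))
        · intro z1 z2 hz1 hz2 hn1 hn2
          by_contra hz12
          have hz1a : z1 ≠ a := fun h => hz1 (by simp [h])
          have hz2a : z2 ≠ a := fun h => hz2 (by simp [h])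
          exact hno3 a z1 a z2 c d hn1 hn2 hncd (Ne.symm hz1a) (Ne.symm hz2a) hcd_ne
            (sym2_ne₂ hz12 (Ne.symm hz2a))
            (sym2_ne₁ (Ne.symm hca) (Ne.symm hda))
            (sym2_ne₁ (Ne.symm hca) (Ne.symm hda))
        · intro z1 z2 hz1 hz2 hn1 hn2
          by_contra hz12
          have hz2c : z2 ≠ c := fun h => hz2 (by simp [h])
          have hz1c : z1 ≠ c := fun h => hz1 (by simp [h])
          exact hno3 c z1 c z2 a b hn1 hn2 hnab (Ne.symm hz1c) (Ne.symm hz2c) hab_ne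
            (sym2_ne₂ hz12 (Ne.symm hz2c))
            (sym2_ne₁ hca hcb)
            (sym2_ne₁ hca hcb)
        · intro z hz hnaz
          by_contra hn
          have hza : z ≠ a := fun h => hz (by simp [h])
          have hzc : z ≠ c := fun h => hz (by simp [h])
          by_cases hzd : z = d
          · have hzb : z ≠ b := by rw [hzd]; exact hdb
            exact hno3 a z c z a b hnaz hn hnab (Ne.symm hza) (Ne.symm hzc) hab_ne
              (sym2_ne₁ (Ne.symm hca) (Ne.symm hza))
              (sym2_ne₂ hzb hab_ne)
              (sym2_ne₁ hca hcb)
          · exact hno3 a z c z c d hnaz hn hncd (Ne.symm hza) (Ne.symm hzc) hcd_ne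
              (sym2_ne₁ (Ne.symm hca) (Ne.symm hza))
              (sym2_ne₁ (Ne.symm hca) (Ne.symm hda))
              (sym2_ne₂ hzd hcd_ne)
      · push_neg at h2
        refine ⟨a, b, hab_ne, ?_, ?_, ?_, ?_⟩
        · intro x y hxy hnxy
          by_cases hx : x ∈ ({a, b} : Finset V)
          · simp only [mem_insert, mem_singleton] at hx
            tauto
          · have h3 := h2 x y hxy hnxy hx
            simp only [mem_insert, mem_singleton] at h3
            tauto
        · intro z1 z2 hz1 hz2 hn1 hn2
          by_contra hz12
          have hz1a : z1 ≠ a := fun h => hz1 (by simp [h])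
          have hz2a : z2 ≠ a := fun h => hz2 (by simp [h])
          have hz1b : z1 ≠ b := fun h => hz1 (by simp [h])
          have hz2b : z2 ≠ b := fun h => hz2 (by simp [h])
          exact hno3 a z1 a z2 a b hn1 hn2 hnab (Ne.symm hz1a) (Ne.symm hz2a) hab_ne
            (sym2_ne₂ hz12 (Ne.symm hz2a))
            (sym2_ne₂ hz1b hab_ne)
            (sym2_ne₂ hz2b hab_ne)
        · intro z1 z2 hz1 hz2 hn1 hn2
          by_contra hz12
          have hz1a : z1 ≠ a := fun h => hz1 (by simp [h])
          have hz2a : z2 ≠ a := fun h => hz2 (by simp [h])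
          have hz1b : z1 ≠ b := fun h => hz1 (by simp [h])
          have hz2b : z2 ≠ b := fun h => hz2 (by simp [h])
          exact hno3 b z1 b z2 a b hn1 hn2 hnab (Ne.symm hz1b) (Ne.symm hz2b) hab_ne
            (sym2_ne₂ hz12 (Ne.symm hz2b))
            (sym2_ne₃ (Ne.symm hab_ne) hz1a)
            (sym2_ne₃ (Ne.symm hab_ne) hz2a)
        · intro z hz hnaz
          by_contra hn
          have hza : z ≠ a := fun h => hz (by simp [h])
          have hzb : z ≠ b := fun h => hz (by simp [h])
          exact hno3 a z b z a b hnaz hn hnab (Ne.symm hza) (Ne.symm hzb) hab_ne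
            (sym2_ne₁ hab_ne (Ne.symm hza))
            (sym2_ne₂ hzb hab_ne)
            (sym2_ne₃ (Ne.symm hab_ne) hza)
    obtain ⟨p, q, hpq, hcov, hAp, hBq, hPQ⟩ := hcover
    set R : Finset V := univ \ {p, q} with hR
    have hRcard : #R = 4 := by
      rw [hR, card_sdiff_of_subset (subset_univ _), card_univ, hc,
        card_insert_of_notMem (by simp [hpq]), card_singleton]
    set A := R.filter (fun z => ¬ G.Adj p z) with hA
    set B := R.filter (fun z => ¬ G.Adj q z) with hB
    have hRpq : ∀ z ∈ R, z ∉ ({p, q} : Finset V) := by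
      intro z hz; exact (mem_sdiff.mp hz).2
    have hAcard : #A ≤ 1 := by
      rw [card_le_one]
      intro z1 h1 z2 h2
      rw [hA, mem_filter] at h1 h2
      exact hAp z1 z2 (hRpq z1 h1.1) (hRpq z2 h2.1) h1.2 h2.2
    have hBcard : #B ≤ 1 := by
      rw [card_le_one]
      intro z1 h1 z2 h2
      rw [hB, mem_filter] at h1 h2
      exact hBq z1 z2 (hRpq z1 h1.1) (hRpq z2 h2.1) h1.2 h2.2
    have hABdisj : ∀ z, z ∈ A → z ∉ B := by
      intro z hzA hzB
      rw [hA, mem_filter] at hzA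
      rw [hB, mem_filter] at hzB
      exact hzB.2 (hPQ z (hRpq z hzA.1) hzA.2)
    have hRAcard : 3 ≤ #(R \ A) := by
      have h1 := le_card_sdiff A R
      omega
    have hsel : ∃ x1 x2, x1 ∈ R ∧ x2 ∈ R ∧ x1 ≠ x2 ∧ x1 ∉ A ∧ x2 ∉ A ∧
        ∀ z ∈ B, z = x1 ∨ z = x2 := by
      rcases B.eq_empty_or_nonempty with hBe | ⟨β, hβ⟩
      · obtain ⟨x1, hx1⟩ : (R \ A).Nonempty := card_pos.mp (by omega)
        obtain ⟨x2, hx2⟩ : ((R \ A).erase x1).Nonempty :=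
          card_pos.mp (by rw [card_erase_of_mem hx1]; omega)
        have hx2' := mem_of_mem_erase hx2
        exact ⟨x1, x2, (mem_sdiff.mp hx1).1, (mem_sdiff.mp hx2').1,
          (ne_of_mem_erase hx2).symm, (mem_sdiff.mp hx1).2, (mem_sdiff.mp hx2').2,
          by simp [hBe]⟩
      · have hβ' := hβ
        rw [hB, mem_filter] at hβ'
        have hβA : β ∉ A := fun h => hABdisj β h hβ
        obtain ⟨x2, hx2⟩ : ((R \ A).erase β).Nonempty := by
          rw [← card_pos, card_erase_of_mem (mem_sdiff.mpr ⟨hβ'.1, hβA⟩)]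
          omega
        have hx2' := mem_of_mem_erase hx2
        refine ⟨β, x2, hβ'.1, (mem_sdiff.mp hx2').1, (ne_of_mem_erase hx2).symm,
          hβA, (mem_sdiff.mp hx2').2, ?_⟩
        intro z hz
        exact Or.inl (card_le_one.mp hBcard z hz β hβ)
    obtain ⟨x1, x2, hx1R, hx2R, hx12, hx1A, hx2A, hBsub⟩ := hsel
    have hxx2 : #({x1, x2} : Finset V) = 2 := by
      rw [card_insert_of_notMem (by simp [hx12]), card_singleton]
    have hsub2 : ({x1, x2} : Finset V) ⊆ R := by
      intro z hz
      simp only [mem_insert, mem_singleton] at hz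
      rcases hz with h | h <;> subst h <;> assumption
    have hYcard : #(R \ {x1, x2}) = 2 := by
      rw [card_sdiff_of_subset hsub2, hRcard, hxx2]
    obtain ⟨y1, hy1⟩ : (R \ {x1, x2}).Nonempty := card_pos.mp (by omega)
    obtain ⟨y2, hy2e⟩ : ((R \ {x1, x2}).erase y1).Nonempty :=
      card_pos.mp (by rw [card_erase_of_mem hy1]; omega)
    have hy2 := mem_of_mem_erase hy2e
    have hy12 : y1 ≠ y2 := (ne_of_mem_erase hy2e).symm
    have hy1R : y1 ∈ R := (mem_sdiff.mp hy1).1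
    have hy2R : y2 ∈ R := (mem_sdiff.mp hy2).1
    have hy1x1 : y1 ≠ x1 := fun h => (mem_sdiff.mp hy1).2 (by simp [h])
    have hy1x2 : y1 ≠ x2 := fun h => (mem_sdiff.mp hy1).2 (by simp [h])
    have hy2x1 : y2 ≠ x1 := fun h => (mem_sdiff.mp hy2).2 (by simp [h])
    have hy2x2 : y2 ≠ x2 := fun h => (mem_sdiff.mp hy2).2 (by simp [h])
    have hRp : ∀ z, z ∈ R → z ≠ p ∧ z ≠ q := by
      intro z hz
      have h1 := hRpq z hz
      exact ⟨fun h => h1 (by simp [h]), fun h => h1 (by simp [h])⟩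
    have hadjp : ∀ z, z ∈ R → z ∉ A → G.Adj p z := by
      intro z hzR hzA
      by_contra hn
      exact hzA (by rw [hA, mem_filter]; exact ⟨hzR, hn⟩)
    have hadjq : ∀ z, z ∈ R → z ∉ B → G.Adj q z := by
      intro z hzR hzB
      by_contra hn
      exact hzB (by rw [hB, mem_filter]; exact ⟨hzR, hn⟩)
    have hy1B : y1 ∉ B := by
      intro h
      rcases hBsub y1 h with h' | h'
      exacts [hy1x1 h', hy1x2 h']
    have hy2B : y2 ∉ B := by
      intro h
      rcases hBsub y2 h with h' | h'
      exacts [hy2x1 h', hy2x2 h']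
    have hgood : ∀ z z', z ∈ R → z' ∈ R → z ≠ z' → G.Adj z z' := by
      intro z z' hz hz' hne
      by_contra hn
      rcases hcov z z' hne hn with h | h | h | h
      exacts [(hRp z hz).1 h, (hRp z hz).2 h, (hRp z' hz').1 h, (hRp z' hz').2 h]
    apply hfree
    exact dumbbell_copy
      (Ne.symm hy1x2) (hRp x2 hx2R).2 (Ne.symm hy2x2)
      (Ne.symm (hRp y1 hy1R).1) hpq (Ne.symm (hRp y2 hy2R).1)
      (hRp x1 hx1R).2 (Ne.symm hy2x1)
      (hadjp x2 hx2R hx2A).symm (hadjp x1 hx1R hx1A)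
      (hgood x2 x1 hx2R hx1R (Ne.symm hx12))
      (hgood x1 y1 hx1R hy1R (Ne.symm hy1x1))
      (hadjq y1 hy1R hy1B).symm (hadjq y2 hy2R hy2B)
      (hgood y1 y2 hy1R hy2R hy12)

lemma seven_upper {V : Type} [Fintype V] [DecidableEq V] (G : SimpleGraph V)
    [DecidableRel G.Adj] (hc : Fintype.card V = 7) (hd : ∀ v, 4 ≤ G.degree v)
    (hfree : ¬ (dumbbell 3 3 1).ContainsCopy G) : #G.edgeFinset ≤ 15 := by
  by_contra hbig
  push_neg at hbig
  have hdeg1 : ∀ v, Fintype.card V + 1 ≤ 2 * G.degree v := by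
    intro v; have := hd v; omega
  have hNT : ∀ a b c d e f : V, a ≠ d → a ≠ e → a ≠ f → b ≠ d → b ≠ e → b ≠ f →
      c ≠ d → c ≠ e → c ≠ f → G.Adj a b → G.Adj b c → G.Adj a c →
      G.Adj d e → G.Adj e f → G.Adj d f → False := by
    intro a b c d e f h1 h2 h3 h4 h5 h6 h7 h8 h9 p1 p2 p3 p4 p5 p6
    exact hfree (lemA hdeg1 h1 h2 h3 h4 h5 h6 h7 h8 h9 p1 p2 p3 p4 p5 p6)
  -- find a triangle u, v0, w
  have hne : Nonempty V := Fintype.card_pos_iff.mp (by omega)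
  obtain ⟨v0⟩ := hne
  obtain ⟨u, hu⟩ : (G.neighborFinset v0).Nonempty := by
    rw [← card_pos, card_neighborFinset_eq_degree]; have := hd v0; omega
  rw [mem_neighborFinset] at hu
  obtain ⟨w, hwu, hwv0⟩ : ∃ z, G.Adj u z ∧ G.Adj v0 z := by
    apply exists_common_nbr; have := hd u; have := hd v0; omega
  set T : Finset V := {u, v0, w} with hT
  have huT : u ∈ T := by simp [hT]
  have hv0T : v0 ∈ T := by simp [hT]
  have hwT : w ∈ T := by simp [hT]
  have hTcard : #T = 3 := by
    rw [hT, card_insert_of_notMem (by simp [hu.ne', hwu.ne]),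
      card_insert_of_notMem (by simp [hwv0.ne]), card_singleton]
  set S : Finset V := univ \ T with hS
  have hScard : #S = 4 := by
    rw [hS, card_sdiff_of_subset (subset_univ T), card_univ, hc, hTcard]
  have hStri : ∀ x ∈ S, ∀ y ∈ S, ∀ z ∈ S,
      ¬(G.Adj x y ∧ G.Adj y z ∧ G.Adj x z) := by
    intro x hx y hy z hz ⟨hxy, hyz, hxz⟩
    have hxT : x ∉ T := (mem_sdiff.mp hx).2
    have hyT : y ∉ T := (mem_sdiff.mp hy).2
    have hzT : z ∉ T := (mem_sdiff.mp hz).2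
    exact hNT u v0 w x y z
      (fun h => hxT (h ▸ huT)) (fun h => hyT (h ▸ huT)) (fun h => hzT (h ▸ huT))
      (fun h => hxT (h ▸ hv0T)) (fun h => hyT (h ▸ hv0T)) (fun h => hzT (h ▸ hv0T))
      (fun h => hxT (h ▸ hwT)) (fun h => hyT (h ▸ hwT)) (fun h => hzT (h ▸ hwT))
      hu.symm hwv0 hwu hxy hyz hxz
  have hSnbr : ∀ x ∈ S, 1 ≤ #(S.filter (G.Adj x)) := by
    intro x _
    have h1 := deg_split (G := G) T x
    have h2 : #(T.filter (G.Adj x)) ≤ 3 := le_trans (card_filter_le _ _) (le_of_eq hTcard)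
    have := hd x; rw [hS]; omega
  by_cases hd2 : ∃ x ∈ S, ∃ y ∈ S, ∃ x' ∈ S, ∃ y' ∈ S,
      x ≠ x' ∧ x ≠ y' ∧ y ≠ x' ∧ y ≠ y' ∧ G.Adj x y ∧ G.Adj x' y'
  · -- Case I : two disjoint edges inside S
    obtain ⟨x, hxS, y, hyS, x', hx'S, y', hy'S, hxx', hxy', hyx', hyy', hxy, hx'y'⟩ := hd2
    have hxT : x ∉ T := (mem_sdiff.mp hxS).2
    have hyT : y ∉ T := (mem_sdiff.mp hyS).2
    have hx'T : x' ∉ T := (mem_sdiff.mp hx'S).2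
    have hy'T : y' ∉ T := (mem_sdiff.mp hy'S).2
    have hq4 : #({x, y, x', y'} : Finset V) = 4 := by
      rw [card_insert_of_notMem (by simp [hxy.ne, hxx', hxy']),
        card_insert_of_notMem (by simp [hyx', hyy']),
        card_insert_of_notMem (by simp [hx'y'.ne]), card_singleton]
    have hSeq : S = {x, y, x', y'} := by
      symm
      apply eq_of_subset_of_card_le
      · intro p hp
        simp only [mem_insert, mem_singleton] at hp
        rcases hp with h | h | h | h <;> subst h <;> assumption
      · omega
    set C1 := univ.filter (fun p => G.Adj x p ∧ G.Adj y p) with hC1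
    set C2 := univ.filter (fun p => G.Adj x' p ∧ G.Adj y' p) with hC2
    have hC1card : 1 ≤ #C1 := by
      rw [hC1]
      have := common_lower (G := G) x y
      have := hd x; have := hd y; omega
    have hC2card : 1 ≤ #C2 := by
      rw [hC2]
      have := common_lower (G := G) x' y'
      have := hd x'; have := hd y'; omega
    have hC1T : C1 ⊆ T := by
      intro p hp; rw [hC1, mem_filter] at hp
      by_contra hpT
      exact hStri x hxS y hyS p (by rw [hS, mem_sdiff]; exact ⟨mem_univ _, hpT⟩)
        ⟨hxy, hp.2.2, hp.2.1⟩
    have hC2T : C2 ⊆ T := by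
      intro p hp; rw [hC2, mem_filter] at hp
      by_contra hpT
      exact hStri x' hx'S y' hy'S p (by rw [hS, mem_sdiff]; exact ⟨mem_univ _, hpT⟩)
        ⟨hx'y', hp.2.2, hp.2.1⟩
    have htsame : ∀ t1 ∈ C1, ∀ t2 ∈ C2, t1 = t2 := by
      intro t1 ht1 t2 ht2
      by_contra hne12
      have ht1T := hC1T ht1
      have ht2T := hC2T ht2
      rw [hC1, mem_filter] at ht1
      rw [hC2, mem_filter] at ht2
      exact hNT x y t1 x' y' t2 hxx' hxy' (fun h => hxT (h ▸ ht2T)) hyx' hyy'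
        (fun h => hyT (h ▸ ht2T)) (fun h => hx'T (h ▸ ht1T))
        (fun h => hy'T (h ▸ ht1T)) hne12
        hxy ht1.2.2 ht1.2.1 hx'y' ht2.2.2 ht2.2.1
    obtain ⟨t, htC1⟩ : C1.Nonempty := card_pos.mp (by omega)
    obtain ⟨t2', ht2C2⟩ : C2.Nonempty := card_pos.mp (by omega)
    have htC2 : t ∈ C2 := by rw [htsame t htC1 t2' ht2C2]; exact ht2C2
    have htT : t ∈ T := hC1T htC1
    have hnotboth2 : ∀ s ∈ S, ¬(G.Adj s x' ∧ G.Adj s y') := by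
      rintro s hsS ⟨h1, h2⟩
      have hsC2 : s ∈ C2 := by rw [hC2, mem_filter]; exact ⟨mem_univ _, h1.symm, h2.symm⟩
      have := htsame t htC1 s hsC2
      exact (mem_sdiff.mp hsS).2 (this ▸ htT)
    have hnotboth1 : ∀ s ∈ S, ¬(G.Adj s x ∧ G.Adj s y) := by
      rintro s hsS ⟨h1, h2⟩
      have hsC1 : s ∈ C1 := by rw [hC1, mem_filter]; exact ⟨mem_univ _, h1.symm, h2.symm⟩
      have := htsame s hsC1 t htC2
      exact (mem_sdiff.mp hsS).2 (this ▸ htT)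
    have hTother : ∀ p ∈ T.erase t, #(S.filter (G.Adj p)) ≤ 2 := by
      intro p hp
      have hpt : p ≠ t := ne_of_mem_erase hp
      have h1 : ¬(G.Adj p x ∧ G.Adj p y) := by
        rintro ⟨ha, hb⟩
        have hpC1 : p ∈ C1 := by rw [hC1, mem_filter]; exact ⟨mem_univ _, ha.symm, hb.symm⟩
        exact hpt (htsame p hpC1 t htC2)
      have h2 : ¬(G.Adj p x' ∧ G.Adj p y') := by
        rintro ⟨ha, hb⟩
        have hpC2 : p ∈ C2 := by rw [hC2, mem_filter]; exact ⟨mem_univ _, ha.symm, hb.symm⟩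
        exact hpt (htsame t htC1 p hpC2).symm
      have hsplit : S.filter (G.Adj p)
          = ({x, y} : Finset V).filter (G.Adj p) ∪ ({x', y'} : Finset V).filter (G.Adj p) := by
        rw [hSeq, ← filter_union]
        congr 1
        ext q
        simp only [mem_insert, mem_singleton, mem_union]
        tauto
      rw [hsplit]
      exact le_trans (card_union_le _ _)
        (add_le_add (pair_filter_le p x y hxy.ne h1) (pair_filter_le p x' y' hx'y'.ne h2))
    have hSint : ∀ s ∈ S, #(S.filter (G.Adj s)) ≤ 2 := by
      intro s hsS
      have hs4 : s = x ∨ s = y ∨ s = x' ∨ s = y' := by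
        have := hsS; rw [hSeq] at this
        simpa using this
      have hgen : ∀ z1 z2 z3 : V, z2 ≠ z3 → ¬(G.Adj s z2 ∧ G.Adj s z3) →
          (∀ q ∈ S, G.Adj s q → q = z1 ∨ q = z2 ∨ q = z3) →
          #(S.filter (G.Adj s)) ≤ 2 := by
        intro z1 z2 z3 hz23 hnb hmem
        have hsub : S.filter (G.Adj s) ⊆ insert z1 (({z2, z3} : Finset V).filter (G.Adj s)) := by
          intro q hq
          rw [mem_filter] at hq
          rcases hmem q hq.1 hq.2 with h | h | h
          · subst h; exact mem_insert_self _ _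
          · subst h; exact mem_insert_of_mem (by rw [mem_filter]; simp [hq.2])
          · subst h; exact mem_insert_of_mem (by rw [mem_filter]; simp [hq.2])
        calc #(S.filter (G.Adj s)) ≤ #(insert z1 (({z2, z3} : Finset V).filter (G.Adj s))) :=
              card_le_card hsub
          _ ≤ #(({z2, z3} : Finset V).filter (G.Adj s)) + 1 := card_insert_le _ _
          _ ≤ 2 := by have := pair_filter_le s z2 z3 hz23 hnb; omega
      have hmemS : ∀ q ∈ S, q = x ∨ q = y ∨ q = x' ∨ q = y' := by
        intro q hq; rw [hSeq] at hq; simpa using hq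
      rcases hs4 with h | h | h | h
      · refine hgen y x' y' hx'y'.ne (hnotboth2 s hsS) ?_
        intro q hq hadj
        rcases hmemS q hq with h' | h' | h' | h'
        · exfalso; rw [h', ← h] at hadj; exact G.irrefl hadj
        · tauto
        · tauto
        · tauto
      · refine hgen x x' y' hx'y'.ne (hnotboth2 s hsS) ?_
        intro q hq hadj
        rcases hmemS q hq with h' | h' | h' | h'
        · tauto
        · exfalso; rw [h', ← h] at hadj; exact G.irrefl hadj
        · tauto
        · tauto
      · refine hgen y' x y hxy.ne (hnotboth1 s hsS) ?_
        intro q hq hadj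
        rcases hmemS q hq with h' | h' | h' | h'
        · tauto
        · tauto
        · exfalso; rw [h', ← h] at hadj; exact G.irrefl hadj
        · tauto
      · refine hgen x' x y hxy.ne (hnotboth1 s hsS) ?_
        intro q hq hadj
        rcases hmemS q hq with h' | h' | h' | h'
        · tauto
        · tauto
        · tauto
        · exfalso; rw [h', ← h] at hadj; exact G.irrefl hadj
    -- final counting
    have hsum := G.sum_degrees_eq_twice_card_edges
    have hsplit_univ : ∑ v ∈ S, G.degree v + ∑ v ∈ T, G.degree v = ∑ v, G.degree v := by
      rw [hS]; exact sum_sdiff (subset_univ T)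
    have hdegt : G.degree t ≤ 6 := by have := G.degree_lt_card_verts t; omega
    have hToth_deg : ∀ p ∈ T.erase t, G.degree p ≤ 4 := by
      intro p hp
      have h1 := deg_split (G := G) T p
      have h2 : #(T.filter (G.Adj p)) ≤ 2 := by
        have hsub : T.filter (G.Adj p) ⊆ T.erase p := by
          intro q hq; rw [mem_filter] at hq
          exact mem_erase.mpr ⟨fun h => G.irrefl (h ▸ hq.2), hq.1⟩
        have h3 := card_le_card hsub
        rw [card_erase_of_mem (mem_of_mem_erase hp), hTcard] at h3
        omega
      have h3 := hTother p hp
      rw [← hS] at h1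
      omega
    have hsumT : ∑ v ∈ T, G.degree v ≤ 14 := by
      rw [← add_sum_erase T _ htT]
      have h1 : ∑ v ∈ T.erase t, G.degree v ≤ 8 := by
        have h2 := sum_le_card_nsmul (T.erase t) _ 4 hToth_deg
        rw [card_erase_of_mem htT, hTcard] at h2
        simpa using h2
      omega
    have hcross : ∑ s ∈ S, #(T.filter (G.Adj s)) ≤ 8 := by
      rw [cross_sum]
      rw [← add_sum_erase T _ htT]
      have h1 : #(S.filter (G.Adj t)) ≤ 4 := by
        rw [← hScard]; exact card_filter_le _ _
      have h2 : ∑ p ∈ T.erase t, #(S.filter (G.Adj p)) ≤ 4 := by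
        have h3 := sum_le_card_nsmul (T.erase t) _ 2 hTother
        rw [card_erase_of_mem htT, hTcard] at h3
        simpa using h3
      omega
    have hsumS : ∑ v ∈ S, G.degree v ≤ 16 := by
      have h1 : ∑ v ∈ S, G.degree v
          = ∑ v ∈ S, (#(T.filter (G.Adj v)) + #(S.filter (G.Adj v))) := by
        apply sum_congr rfl
        intro v _
        rw [deg_split (G := G) T v, hS]
      rw [h1, sum_add_distrib]
      have h2 : ∑ v ∈ S, #(S.filter (G.Adj v)) ≤ 8 := by
        have h3 := sum_le_card_nsmul S _ 2 hSint
        rw [hScard] at h3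
        simpa using h3
      omega
    omega
  · -- Case II : star inside S
    push_neg at hd2
    obtain ⟨a, haS⟩ : S.Nonempty := card_pos.mp (by omega)
    obtain ⟨b, hb⟩ : (S.filter (G.Adj a)).Nonempty :=
      card_pos.mp (by have := hSnbr a haS; omega)
    have hbS : b ∈ S := (mem_filter.mp hb).1
    have hab : G.Adj a b := (mem_filter.mp hb).2
    obtain ⟨c, hcmem⟩ : (S \ {a, b}).Nonempty := by
      rw [← card_pos]
      have h1 := le_card_sdiff ({a, b} : Finset V) S
      have h2 : #({a, b} : Finset V) ≤ 2 := (card_insert_le _ _).trans (by simp)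
      omega
    have hcS : c ∈ S := (mem_sdiff.mp hcmem).1
    have hca : c ≠ a := fun h => (mem_sdiff.mp hcmem).2 (by simp [h])
    have hcb : c ≠ b := fun h => (mem_sdiff.mp hcmem).2 (by simp [h])
    obtain ⟨d, hdmem⟩ : (S \ {a, b, c}).Nonempty := by
      rw [← card_pos]
      have h1 := le_card_sdiff ({a, b, c} : Finset V) S
      have h2 : #({a, b, c} : Finset V) ≤ 3 := by
        have h3 := card_insert_le a ({b, c} : Finset V)
        have h4 := card_insert_le b ({c} : Finset V)
        simp only [card_singleton] at h4
        omega
      omega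
    have hdS : d ∈ S := (mem_sdiff.mp hdmem).1
    have hda : d ≠ a := fun h => (mem_sdiff.mp hdmem).2 (by simp [h])
    have hdb : d ≠ b := fun h => (mem_sdiff.mp hdmem).2 (by simp [h])
    have hdc : d ≠ c := fun h => (mem_sdiff.mp hdmem).2 (by simp [h])
    have habcd : #({a, b, c, d} : Finset V) = 4 := by
      rw [card_insert_of_notMem (by simp [hab.ne, Ne.symm hca, Ne.symm hda]),
        card_insert_of_notMem (by simp [Ne.symm hcb, Ne.symm hdb]),
        card_insert_of_notMem (by simp [Ne.symm hdc]), card_singleton]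
    have hSeq : S = {a, b, c, d} := by
      symm
      apply eq_of_subset_of_card_le
      · intro p hp
        simp only [mem_insert, mem_singleton] at hp
        rcases hp with h | h | h | h <;> subst h <;> assumption
      · omega
    have hmemS : ∀ q ∈ S, q = a ∨ q = b ∨ q = c ∨ q = d := by
      intro q hq; rw [hSeq] at hq; simpa using hq
    have hncd : ¬ G.Adj c d :=
      hd2 a haS b hbS c hcS d hdS (Ne.symm hca) (Ne.symm hda) (Ne.symm hcb) (Ne.symm hdb) hab
    obtain ⟨e, hemem⟩ : (S.filter (G.Adj c)).Nonempty :=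
      card_pos.mp (by have := hSnbr c hcS; omega)
    have heS : e ∈ S := (mem_filter.mp hemem).1
    have hce : G.Adj c e := (mem_filter.mp hemem).2
    have heab : e = a ∨ e = b := by
      rcases hmemS e heS with h | h | h | h
      · exact Or.inl h
      · exact Or.inr h
      · exfalso; rw [h] at hce; exact G.irrefl hce
      · exfalso; rw [h] at hce; exact hncd hce
    obtain ⟨f, hfmem⟩ : (S.filter (G.Adj d)).Nonempty :=
      card_pos.mp (by have := hSnbr d hdS; omega)
    have hfS : f ∈ S := (mem_filter.mp hfmem).1
    have hdf2 : G.Adj d f := (mem_filter.mp hfmem).2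
    have hfab : f = a ∨ f = b := by
      rcases hmemS f hfS with h | h | h | h
      · exact Or.inl h
      · exact Or.inr h
      · exfalso; rw [h] at hdf2; exact hncd hdf2.symm
      · exfalso; rw [h] at hdf2; exact G.irrefl hdf2
    have hsame : (e = a ∧ f = a) ∨ (e = b ∧ f = b) := by
      rcases heab with he' | he' <;> rcases hfab with hf' | hf'
      · exact Or.inl ⟨he', hf'⟩
      · exfalso
        have h1 : G.Adj c a := by rw [← he']; exact hce
        have h2 : G.Adj d b := by rw [← hf']; exact hdf2
        exact hd2 c hcS a haS d hdS b hbS (Ne.symm hdc) hcb (Ne.symm hda) hab.ne h1 h2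
      · exfalso
        have h1 : G.Adj c b := by rw [← he']; exact hce
        have h2 : G.Adj d a := by rw [← hf']; exact hdf2
        exact hd2 c hcS b hbS d hdS a haS (Ne.symm hdc) hca (Ne.symm hdb) hab.ne' h1 h2
      · exact Or.inr ⟨he', hf'⟩
    have hcore : ∀ m l1 l2 l3 : V, m ∈ S → l1 ∈ S → l2 ∈ S → l3 ∈ S →
        l1 ≠ l2 → l1 ≠ l3 → l2 ≠ l3 → m ≠ l1 → m ≠ l2 → m ≠ l3 →
        G.Adj m l1 → G.Adj m l2 → G.Adj m l3 → False := by
      intro m l1 l2 l3 hmS h1S h2S h3S h12 h13 h23 hm1 hm2 hm3 ha1 ha2 ha3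
      have hn12 : ¬ G.Adj l1 l2 :=
        hd2 m hmS l3 h3S l1 h1S l2 h2S hm1 hm2 (Ne.symm h13) (Ne.symm h23) ha3
      have hn13 : ¬ G.Adj l1 l3 :=
        hd2 m hmS l2 h2S l1 h1S l3 h3S hm1 hm3 (Ne.symm h12) h23 ha2
      have hn23 : ¬ G.Adj l2 l3 :=
        hd2 m hmS l1 h1S l2 h2S l3 h3S hm2 hm3 h12 h13 ha1
      have h4' : #({m, l1, l2, l3} : Finset V) = 4 := by
        rw [card_insert_of_notMem (by simp [hm1, hm2, hm3]),
          card_insert_of_notMem (by simp [h12, h13]),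
          card_insert_of_notMem (by simp [h23]), card_singleton]
      have heq4 : ({m, l1, l2, l3} : Finset V) = S := by
        apply eq_of_subset_of_card_le
        · intro p hp
          simp only [mem_insert, mem_singleton] at hp
          rcases hp with h | h | h | h <;> subst h <;> assumption
        · omega
      have hSm : ∀ q ∈ S, q = m ∨ q = l1 ∨ q = l2 ∨ q = l3 := by
        intro q hq; rw [← heq4] at hq; simpa using hq
      have hTfull : ∀ l, l ∈ S → (S.filter (G.Adj l) ⊆ {m}) → T.filter (G.Adj l) = T := by
        intro l hlS hsub
        apply eq_of_subset_of_card_le (filter_subset _ _)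
        have h1 := deg_split (G := G) T l
        rw [← hS] at h1
        have h2 : #(S.filter (G.Adj l)) ≤ 1 := le_trans (card_le_card hsub) (by simp)
        have := hd l
        rw [hTcard]
        omega
      have hT1 : T.filter (G.Adj l1) = T := by
        apply hTfull l1 h1S
        intro q hq
        rw [mem_filter] at hq
        rcases hSm q hq.1 with h | h | h | h
        · simp [h]
        · exfalso; rw [h] at hq; exact G.irrefl hq.2
        · exfalso; rw [h] at hq; exact hn12 hq.2
        · exfalso; rw [h] at hq; exact hn13 hq.2
      have hT2 : T.filter (G.Adj l2) = T := by
        apply hTfull l2 h2S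
        intro q hq
        rw [mem_filter] at hq
        rcases hSm q hq.1 with h | h | h | h
        · simp [h]
        · exfalso; rw [h] at hq; exact hn12 hq.2.symm
        · exfalso; rw [h] at hq; exact G.irrefl hq.2
        · exfalso; rw [h] at hq; exact hn23 hq.2
      have hl1u : G.Adj l1 u := (mem_filter.mp (by rw [hT1]; exact huT : u ∈ T.filter (G.Adj l1))).2
      have hl1v : G.Adj l1 v0 := (mem_filter.mp (by rw [hT1]; exact hv0T : v0 ∈ T.filter (G.Adj l1))).2
      have hl1w : G.Adj l1 w := (mem_filter.mp (by rw [hT1]; exact hwT : w ∈ T.filter (G.Adj l1))).2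
      have hl2u : G.Adj l2 u := (mem_filter.mp (by rw [hT2]; exact huT : u ∈ T.filter (G.Adj l2))).2
      have hl2v : G.Adj l2 v0 := (mem_filter.mp (by rw [hT2]; exact hv0T : v0 ∈ T.filter (G.Adj l2))).2
      have hl2w : G.Adj l2 w := (mem_filter.mp (by rw [hT2]; exact hwT : w ∈ T.filter (G.Adj l2))).2
      have hmT2 : ∃ p ∈ T, G.Adj m p := by
        by_contra hcon
        push_neg at hcon
        have h1 := deg_split (G := G) T m
        rw [← hS] at h1
        have h2 : T.filter (G.Adj m) = ∅ := filter_eq_empty_iff.mpr hcon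
        have h3 : #(S.filter (G.Adj m)) ≤ 3 := by
          have hsub : S.filter (G.Adj m) ⊆ S.erase m := by
            intro q hq
            rw [mem_filter] at hq
            exact mem_erase.mpr ⟨fun h => G.irrefl (h ▸ hq.2), hq.1⟩
          have h4 := card_le_card hsub
          rw [card_erase_of_mem hmS, hScard] at h4
          omega
        rw [h2, card_empty] at h1
        have := hd m
        omega
      obtain ⟨p, hpT, hmp⟩ := hmT2
      have hmnT : m ∉ T := (mem_sdiff.mp hmS).2
      have hl1nT : l1 ∉ T := (mem_sdiff.mp h1S).2
      have hl2nT : l2 ∉ T := (mem_sdiff.mp h2S).2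
      have hpuvw : p = u ∨ p = v0 ∨ p = w := by
        have := hpT; rw [hT] at this; simpa using this
      rcases hpuvw with h | h | h
      · -- triangles (m, u, l1) and (v0, w, l2)
        have hmu : G.Adj m u := by rw [← h]; exact hmp
        exact hNT m u l1 v0 w l2
          (fun hh => hmnT (hh ▸ hv0T)) (fun hh => hmnT (hh ▸ hwT)) hm2
          hu.ne' hwu.ne (fun hh => hl2nT (hh ▸ huT))
          (fun hh => hl1nT (hh ▸ hv0T)) (fun hh => hl1nT (hh ▸ hwT)) h12
          hmu hl1u.symm ha1 hwv0 hl2w.symm hl2v.symm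
      · -- triangles (m, v0, l1) and (u, w, l2)
        have hmv : G.Adj m v0 := by rw [← h]; exact hmp
        exact hNT m v0 l1 u w l2
          (fun hh => hmnT (hh ▸ huT)) (fun hh => hmnT (hh ▸ hwT)) hm2
          hu.ne hwv0.ne (fun hh => hl2nT (hh ▸ hv0T))
          (fun hh => hl1nT (hh ▸ huT)) (fun hh => hl1nT (hh ▸ hwT)) h12
          hmv hl1v.symm ha1 hwu hl2w.symm hl2u.symm
      · -- triangles (m, w, l1) and (u, v0, l2)
        have hmw : G.Adj m w := by rw [← h]; exact hmp
        exact hNT m w l1 u v0 l2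
          (fun hh => hmnT (hh ▸ huT)) (fun hh => hmnT (hh ▸ hv0T)) hm2
          hwu.ne' hwv0.ne' (fun hh => hl2nT (hh ▸ hwT))
          (fun hh => hl1nT (hh ▸ huT)) (fun hh => hl1nT (hh ▸ hv0T)) h12
          hmw hl1w.symm ha1 hu.symm hl2v.symm hl2u.symm
    rcases hsame with ⟨he', hf'⟩ | ⟨he', hf'⟩
    · have hac2 : G.Adj a c := by rw [he'] at hce; exact hce.symm
      have had2 : G.Adj a d := by rw [hf'] at hdf2; exact hdf2.symm
      exact hcore a b c d haS hbS hcS hdS (Ne.symm hcb) (Ne.symm hdb) (Ne.symm hdc)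
        hab.ne (Ne.symm hca) (Ne.symm hda) hab hac2 had2
    · have hbc2 : G.Adj b c := by rw [he'] at hce; exact hce.symm
      have hbd2 : G.Adj b d := by rw [hf'] at hdf2; exact hdf2.symm
      exact hcore b a c d hbS haS hcS hdS (Ne.symm hca) (Ne.symm hda) (Ne.symm hdc)
        hab.ne' (Ne.symm hcb) (Ne.symm hdb) hab.symm hbc2 hbd2

lemma upper_main : ∀ n : ℕ, 6 ≤ n → ∀ (V : Type) [Fintype V] [DecidableEq V]
    (G : SimpleGraph V) [DecidableRel G.Adj], Fintype.card V = n →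
    ¬ (dumbbell 3 3 1).ContainsCopy G → #G.edgeFinset ≤ dbound n := by
  intro n hn
  induction n, hn using Nat.le_induction with
  | base =>
    intro V _ _ G _ hc hfree
    exact six_upper G hc hfree
  | succ n hn ih =>
    intro V _ _ G _ hc hfree
    by_cases hlow : ∃ v : V, G.degree v ≤ dbound (n + 1) - dbound n
    · obtain ⟨v, hv⟩ := hlow
      have hrec := ih {x : V // x ≠ v} (G.induce {x | x ≠ v})
        (by rw [card_subtype_ne, hc]; omega)
        (fun hcopy => hfree (copy_of_induce hcopy))
      have hrec' : #(G.induce {x | x ≠ v}).edgeFinset ≤ dbound n := by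
        convert hrec using 2
      have hcard := card_edge_induce (G := G) v
      have hmono : dbound n ≤ dbound (n + 1) := by
        rcases Nat.eq_or_lt_of_le hn with h | h
        · rw [← h]; rw [dbound_six, dbound_seven]; omega
        · rw [dbound_succ (by omega)]; omega
      omega
    · push_neg at hlow
      rcases Nat.eq_or_lt_of_le hn with h | h
      · have hc7 : Fintype.card V = 7 := by omega
        have hd : ∀ v, 4 ≤ G.degree v := by
          intro v
          have h2 := hlow v
          rw [← h, dbound_seven, dbound_six] at h2
          omega
        have h3 := seven_upper G hc7 hd hfree
        have h4 : dbound (n + 1) = 15 := by rw [← h]; exact dbound_seven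
        omega
      · exfalso
        apply hfree
        apply dense_dumbbell (by omega)
        intro v
        have h1 := hlow v
        rw [dbound_succ (by omega)] at h1
        omega
end upperskeleton

section lower6
open SimpleGraph Finset

def G6 : SimpleGraph (Fin 6) where
  Adj i j := i ≠ j ∧ (3 ≤ i.val ∨ 3 ≤ j.val)
  symm := by constructor; intro i j h; exact ⟨h.1.symm, h.2.symm⟩
  loopless := ⟨fun i h => h.1 rfl⟩

instance : DecidableRel G6.Adj := fun a b =>
  inferInstanceAs (Decidable (a ≠ b ∧ (3 ≤ a.val ∨ 3 ≤ b.val)))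

lemma G6_card : #G6.edgeFinset = 12 := by decide

lemma G6_free : ¬ (dumbbell 3 3 1).ContainsCopy G6 := by
  rintro ⟨f, hinj, hadj⟩
  -- each triangle has at least two vertices with val ≥ 3
  have htri : ∀ x y z : Fin 6, G6.Adj x y → G6.Adj y z → G6.Adj x z →
      ∃ u v : Fin 6, u ≠ v ∧ (u = x ∨ u = y ∨ u = z) ∧ (v = x ∨ v = y ∨ v = z) ∧
        3 ≤ u.val ∧ 3 ≤ v.val := by
    intro x y z hxy hyz hxz
    by_cases hx : 3 ≤ x.val
    · by_cases hy : 3 ≤ y.val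
      · exact ⟨x, y, hxy.1, Or.inl rfl, Or.inr (Or.inl rfl), hx, hy⟩
      · have hz : 3 ≤ z.val := by rcases hyz.2 with h | h; omega; exact h
        exact ⟨x, z, hxz.1, Or.inl rfl, Or.inr (Or.inr rfl), hx, hz⟩
    · have hy : 3 ≤ y.val := by rcases hxy.2 with h | h; omega; exact h
      have hz : 3 ≤ z.val := by rcases hxz.2 with h | h; omega; exact h
      exact ⟨y, z, hyz.1, Or.inr (Or.inl rfl), Or.inr (Or.inr rfl), hy, hz⟩
  have h01 : (dumbbell 3 3 1).Adj 0 1 := by simp [dumbbell] <;> decide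
  have h12 : (dumbbell 3 3 1).Adj 1 2 := by simp [dumbbell] <;> decide
  have h02 : (dumbbell 3 3 1).Adj 0 2 := by simp [dumbbell] <;> decide
  have h34 : (dumbbell 3 3 1).Adj 3 4 := by simp [dumbbell] <;> decide
  have h45 : (dumbbell 3 3 1).Adj 4 5 := by simp [dumbbell] <;> decide
  have h35 : (dumbbell 3 3 1).Adj 3 5 := by simp [dumbbell] <;> decide
  obtain ⟨u1, v1, hne1, hu1, hv1, hu13, hv13⟩ :=
    htri (f 0) (f 1) (f 2) (hadj h01) (hadj h12) (hadj h02)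
  obtain ⟨u2, v2, hne2, hu2, hv2, hu23, hv23⟩ :=
    htri (f 3) (f 4) (f 5) (hadj h34) (hadj h45) (hadj h35)
  -- u1, v1, u2, v2 are 4 distinct elements with val ≥ 3 : impossible in Fin 6
  have hdiff : ∀ w1 w2 : Fin 6, (w1 = f 0 ∨ w1 = f 1 ∨ w1 = f 2) →
      (w2 = f 3 ∨ w2 = f 4 ∨ w2 = f 5) → w1 ≠ w2 := by
    rintro w1 w2 (rfl | rfl | rfl) (rfl | rfl | rfl) h <;>
      exact absurd (hinj h) (by decide)
  have hsub : ({u1, v1, u2, v2} : Finset (Fin 6)) ⊆ univ.filter (fun i => 3 ≤ i.val) := by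
    intro w hw
    simp only [mem_insert, mem_singleton] at hw
    rw [mem_filter]
    rcases hw with h | h | h | h <;> subst h <;> exact ⟨mem_univ _, by assumption⟩
  have hc4 : #({u1, v1, u2, v2} : Finset (Fin 6)) = 4 := by
    rw [card_insert_of_notMem, card_insert_of_notMem, card_insert_of_notMem,
      card_singleton]
    · simp only [mem_singleton]
      exact hne2
    · simp only [mem_insert, mem_singleton, not_or]
      exact ⟨hdiff v1 u2 hv1 hu2, hdiff v1 v2 hv1 hv2⟩
    · simp only [mem_insert, mem_singleton, not_or]
      exact ⟨hne1, hdiff u1 u2 hu1 hu2, hdiff u1 v2 hu1 hv2⟩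
  have hc3 : #(univ.filter (fun i : Fin 6 => 3 ≤ i.val)) = 3 := by decide
  have := card_le_card hsub
  omega

end lower6

section lowerN
open SimpleGraph Finset

def GLB (n : ℕ) : SimpleGraph (Fin n) where
  Adj i j := i ≠ j ∧ (((i : ℕ) < (n + 1) / 2 ∧ ¬((j : ℕ) < (n + 1) / 2)) ∨
    ((j : ℕ) < (n + 1) / 2 ∧ ¬((i : ℕ) < (n + 1) / 2)) ∨ (i : ℕ) = 0 ∨ (j : ℕ) = 0)
  symm := by
    constructor
    intro i j h
    refine ⟨h.1.symm, ?_⟩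
    rcases h.2 with h' | h' | h' | h' <;> tauto
  loopless := ⟨fun i h => h.1 rfl⟩

lemma GLB_adj {n : ℕ} (i j : Fin n) : (GLB n).Adj i j ↔ i ≠ j ∧
    (((i : ℕ) < (n + 1) / 2 ∧ ¬((j : ℕ) < (n + 1) / 2)) ∨
    ((j : ℕ) < (n + 1) / 2 ∧ ¬((i : ℕ) < (n + 1) / 2)) ∨ (i : ℕ) = 0 ∨ (j : ℕ) = 0) :=
  Iff.rfl

instance (n : ℕ) : DecidableRel (GLB n).Adj := fun i j =>
  decidable_of_iff _ (GLB_adj i j).symm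

lemma GLB_free (n : ℕ) : ¬ (dumbbell 3 3 1).ContainsCopy (GLB n) := by
  rintro ⟨f, hinj, hadj⟩
  have h01 : (dumbbell 3 3 1).Adj 0 1 := by simp [dumbbell] <;> decide
  have h12 : (dumbbell 3 3 1).Adj 1 2 := by simp [dumbbell] <;> decide
  have h02 : (dumbbell 3 3 1).Adj 0 2 := by simp [dumbbell] <;> decide
  have h34 : (dumbbell 3 3 1).Adj 3 4 := by simp [dumbbell] <;> decide
  have h45 : (dumbbell 3 3 1).Adj 4 5 := by simp [dumbbell] <;> decide
  have h35 : (dumbbell 3 3 1).Adj 3 5 := by simp [dumbbell] <;> decide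
  have htri : ∀ x y z : Fin n, (GLB n).Adj x y → (GLB n).Adj y z → (GLB n).Adj x z →
      (x : ℕ) = 0 ∨ (y : ℕ) = 0 ∨ (z : ℕ) = 0 := by
    intro x y z hxy hyz hxz
    by_contra hcon
    push_neg at hcon
    obtain ⟨hx, hy, hz⟩ := hcon
    have p1 := hxy.2
    have p2 := hyz.2
    have p3 := hxz.2
    tauto
  have ht1 := htri (f 0) (f 1) (f 2) (hadj h01) (hadj h12) (hadj h02)
  have ht2 := htri (f 3) (f 4) (f 5) (hadj h34) (hadj h45) (hadj h35)
  rcases ht1 with h | h | h <;> rcases ht2 with h' | h' | h' <;>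
    exact absurd (hinj (Fin.val_injective (h.trans h'.symm))) (by decide)

lemma card_filter_val_lt (n a : ℕ) (h : a ≤ n) :
    #(univ.filter (fun j : Fin n => (j : ℕ) < a)) = a := by
  have h1 : #(univ.filter (fun j : Fin n => (j : ℕ) < a))
      = #((range n).filter (fun j => j < a)) := by
    refine card_bij (fun i _ => (i : ℕ)) ?_ ?_ ?_
    · intro i hi
      rw [mem_filter] at hi ⊢
      exact ⟨mem_range.mpr i.isLt, hi.2⟩
    · intro i _ j _ hij
      exact Fin.val_injective hij
    · intro j hj
      rw [mem_filter, mem_range] at hj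
      exact ⟨⟨j, hj.1⟩, by rw [mem_filter]; exact ⟨mem_univ _, hj.2⟩, rfl⟩
  have h2 : (range n).filter (fun j => j < a) = range a := by
    ext k
    simp only [mem_filter, mem_range]
    omega
  rw [h1, h2, card_range]

lemma GLB_count (n : ℕ) (hn : 7 ≤ n) :
    #(GLB n).edgeFinset = (n + 1) / 2 * (n - (n + 1) / 2) + ((n + 1) / 2 - 1) := by
  set a := (n + 1) / 2 with ha
  have haux : 4 ≤ a ∧ a ≤ n ∧ a + a ≥ n := by
    constructor
    · omega
    constructor <;> omega
  set z0 : Fin n := ⟨0, by omega⟩ with hz0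
  have hlt : #(univ.filter (fun j : Fin n => (j : ℕ) < a)) = a :=
    card_filter_val_lt n a (by omega)
  have hnotlt_eq : univ.filter (fun j : Fin n => ¬((j : ℕ) < a))
      = univ.filter (fun j : Fin n => a ≤ (j : ℕ)) := by
    ext j; simp [not_lt]
  have hcards := card_filter_add_card_filter_not
    (s := (univ : Finset (Fin n))) (p := fun j : Fin n => (j : ℕ) < a)
  rw [card_univ, Fintype.card_fin] at hcards
  have hge : #(univ.filter (fun j : Fin n => a ≤ (j : ℕ))) = n - a := by
    rw [← hnotlt_eq]; omega
  have hdeg0 : (GLB n).degree z0 = n - 1 := by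
    rw [← card_neighborFinset_eq_degree, neighborFinset_eq_filter]
    have heq : univ.filter ((GLB n).Adj z0) = univ.erase z0 := by
      ext j
      simp only [mem_filter, mem_univ, true_and, mem_erase, and_true]
      constructor
      · intro h; exact h.1.symm
      · intro h; exact ⟨fun hh => h hh.symm, Or.inr (Or.inr (Or.inl rfl))⟩
    rw [heq, card_erase_of_mem (mem_univ _), card_univ, Fintype.card_fin]
  have hdegmid : ∀ v : Fin n, (v : ℕ) ≠ 0 → (v : ℕ) < a →
      (GLB n).degree v = n - a + 1 := by
    intro v hv0 hva
    rw [← card_neighborFinset_eq_degree, neighborFinset_eq_filter]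
    have heq : univ.filter ((GLB n).Adj v)
        = insert z0 (univ.filter (fun j : Fin n => a ≤ (j : ℕ))) := by
      ext j
      simp only [mem_filter, mem_univ, true_and, mem_insert]
      constructor
      · intro h
        rcases h.2 with ⟨_, hja⟩ | ⟨hja, hva'⟩ | hv0' | hj0
        · exact Or.inr (not_lt.mp hja)
        · exact absurd hva hva'
        · exact absurd hv0' hv0
        · exact Or.inl (Fin.val_injective (by simpa using hj0))
      · intro h
        rcases h with h | h
        · subst h
          exact ⟨fun hh => hv0 (by rw [hh]), Or.inr (Or.inr (Or.inr rfl))⟩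
        · exact ⟨fun hh => by rw [hh] at hva; omega, Or.inl ⟨hva, not_lt.mpr h⟩⟩
    rw [heq, card_insert_of_notMem (by simp only [mem_filter]; push_neg; intro _; show 0 < a; omega), hge]
  have hdeghigh : ∀ v : Fin n, a ≤ (v : ℕ) → (GLB n).degree v = a := by
    intro v hva
    rw [← card_neighborFinset_eq_degree, neighborFinset_eq_filter]
    have heq : univ.filter ((GLB n).Adj v) = univ.filter (fun j : Fin n => (j : ℕ) < a) := by
      ext j
      simp only [mem_filter, mem_univ, true_and]
      constructor
      · intro h
        rcases h.2 with ⟨hv', _⟩ | ⟨hj, _⟩ | hv0' | hj0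
        · omega
        · exact hj
        · omega
        · omega
      · intro h
        exact ⟨fun hh => by rw [hh] at hva; omega, Or.inr (Or.inl ⟨h, not_lt.mpr hva⟩)⟩
    rw [heq, hlt]
  have hsum := (GLB n).sum_degrees_eq_twice_card_edges
  rw [← sum_filter_add_sum_filter_not univ (fun j : Fin n => (j : ℕ) < a)] at hsum
  have hz0mem : z0 ∈ univ.filter (fun j : Fin n => (j : ℕ) < a) := by
    rw [mem_filter]
    exact ⟨mem_univ _, by simpa using (by omega : 0 < a)⟩
  rw [← add_sum_erase _ _ hz0mem] at hsum
  have h1 : ∑ v ∈ (univ.filter (fun j : Fin n => (j : ℕ) < a)).erase z0, (GLB n).degree v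
      = (a - 1) * (n - a + 1) := by
    rw [Finset.sum_congr rfl (fun v hv => hdegmid v
      (fun hh => (ne_of_mem_erase hv) (Fin.val_injective (by simpa using hh)))
      (mem_filter.mp (mem_of_mem_erase hv)).2)]
    rw [sum_const, card_erase_of_mem hz0mem, hlt, smul_eq_mul]
  have h2 : ∑ v ∈ univ.filter (fun j : Fin n => ¬((j : ℕ) < a)), (GLB n).degree v
      = (n - a) * a := by
    rw [Finset.sum_congr rfl (fun v hv => hdeghigh v (not_lt.mp (mem_filter.mp hv).2))]
    rw [sum_const, smul_eq_mul, ← hnotlt_eq] at *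
    rw [hnotlt_eq, hge]
  rw [hdeg0, h1, h2] at hsum
  -- arithmetic
  obtain ⟨j, hj⟩ : ∃ j, a = j + 1 := ⟨a - 1, by omega⟩
  set b := n - a with hb
  have hnab : n = j + 1 + b := by omega
  have r1 : (a - 1) * (b + 1) = j * b + j := by rw [hj]; simp; ring
  have r2 : b * a = j * b + b := by rw [hj]; ring
  have r3 : a * b = j * b + b := by rw [hj]; ring
  omega

end lowerN

section final
open SimpleGraph Finset

lemma exNum_eq_of {n t : ℕ}
    (hmem : ∃ G : SimpleGraph (Fin n), ¬ (dumbbell 3 3 1).ContainsCopy G ∧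
      G.edgeSet.ncard = t)
    (hub : ∀ G : SimpleGraph (Fin n), ¬ (dumbbell 3 3 1).ContainsCopy G →
      G.edgeSet.ncard ≤ t) :
    exNum n (dumbbell 3 3 1) = t := by
  have hmem' : t ∈ {m : ℕ | ∃ G : SimpleGraph (Fin n),
      ¬ (dumbbell 3 3 1).ContainsCopy G ∧ G.edgeSet.ncard = m} := hmem
  apply le_antisymm
  · apply csSup_le ⟨t, hmem'⟩
    rintro m ⟨G, hG, rfl⟩
    exact hub G hG
  · exact le_csSup ⟨t, by rintro m ⟨G, hG, rfl⟩; exact hub G hG⟩ hmem'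

lemma ncard_eq_card {n : ℕ} (G : SimpleGraph (Fin n)) [DecidableRel G.Adj] :
    G.edgeSet.ncard = #G.edgeFinset := by
  rw [← coe_edgeFinset, Set.ncard_coe_finset]

lemma ub_all (n : ℕ) (hn : 6 ≤ n) (G : SimpleGraph (Fin n))
    (hfree : ¬ (dumbbell 3 3 1).ContainsCopy G) : G.edgeSet.ncard ≤ dbound n := by
  classical
  have h1 := upper_main n hn (Fin n) G (by simp) hfree
  rw [ncard_eq_card G]
  convert h1 using 2

lemma target_eq (n : ℕ) (hn : 7 ≤ n) :
    (n + 1) / 2 * (n - (n + 1) / 2) + ((n + 1) / 2 - 1) = n ^ 2 / 4 + (n + 1) / 2 - 1 := by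
  rcases Nat.even_or_odd n with ⟨k, hk⟩ | ⟨k, hk⟩
  · have e1 : n ^ 2 = 4 * (k * k) := by subst hk; ring
    have ha : (n + 1) / 2 = k := by omega
    rw [ha]
    have hb : n - k = k := by omega
    rw [hb]
    omega
  · have e1 : n ^ 2 = 4 * (k * k + k) + 1 := by subst hk; ring
    have ha : (n + 1) / 2 = k + 1 := by omega
    rw [ha]
    have hb : n - (k + 1) = k := by omega
    rw [hb]
    have e2 : (k + 1) * k = k * k + k := by ring
    omega

theorem statement3 :
    exNum 6 (dumbbell 3 3 1) = 12 ∧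
      ∀ n : ℕ, 7 ≤ n → exNum n (dumbbell 3 3 1) = n ^ 2 / 4 + (n + 1) / 2 - 1 := by
  constructor
  · apply exNum_eq_of
    · exact ⟨G6, G6_free, by rw [ncard_eq_card G6]; exact G6_card⟩
    · intro G hG
      have h1 := ub_all 6 (by norm_num) G hG
      rwa [dbound_six] at h1
  · intro n hn
    apply exNum_eq_of
    · refine ⟨GLB n, GLB_free n, ?_⟩
      rw [ncard_eq_card (GLB n), GLB_count n hn]
      exact target_eq n hn
    · intro G hG
      have h1 := ub_all n (by omega) G hG
      rwa [dbound, if_neg (by omega)] at h1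

end final
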